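/- arXiv:0906.1771 — 7 statements merged into one kernel-verified Lean document; each statement's English description precedes it below -/
import Mathlib

section
/- Let G be an infinite profinite group. Then the following are equivalent: (i) G is just infinite; (ii) for every open subgroup H of G, the set K_H = {K : K is an open normal subgroup of G with K not contained in H} is finite; (iii) there exists a family F of open subgroups of G whose intersection is trivial, such that the set K_H = {K : K is an open normal subgroup of G with K not contained in H} is finite for every H in F. -/
/-!
(i) ⇒ (ii) is the substance. If infinitely many open normal subgroups escape the open subgroup
`H`, take an open normal `N ⊄ H` minimal among those lying above infinitely many of them; it
exists because, by compactness and just infiniteness, the closed normal subgroups not contained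
in `H` satisfy the descending chain condition. Pigeonholing over the finitely many subgroups
containing an open normal `U ≤ N` shows that `U` has a proper open normal supplement in `N`.
Supplementing alternately produces strictly decreasing chains `Aₙ`, `Bₙ` of open normal
subgroups with `Aₙ Bₙ = N`. Just infiniteness makes `⋂ Aₙ` and `⋂ Bₙ` trivial, while
compactness gives `N ⊆ (⋂ Aₙ)(⋂ Bₙ)`; so `N = 1`, which is absurd.

(iii) ⇒ (i): a nontrivial closed normal `N` escapes some `H ∈ F`, so there are only finitely many
subgroups `NU` with `U` open normal; `N` is their intersection, hence open.
-/

open scoped Pointwise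

namespace Subgroup

variable {G : Type*} [Group G]

theorem finite_setOf_le_of_finiteIndex (U : Subgroup G) [U.Normal] [U.FiniteIndex] :
    {M : Subgroup G | U ≤ M}.Finite := by
  refine Set.Finite.of_finite_image (f := map (QuotientGroup.mk' U)) (Set.toFinite _) ?_
  intro M₁ h₁ M₂ h₂ h
  exact map_injective_of_ker_le _ (by simpa using h₁) (by simpa using h₂) h

theorem inf_sup_eq_of_sup_eq {N P Q C : Subgroup G} [Q.Normal] [C.Normal]
    (hPQ : P ⊔ Q = N) (hC : C ⊔ P ⊓ Q = N) : C ⊓ P ⊔ Q = N := by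
  refine le_antisymm (hPQ ▸ sup_le_sup_right inf_le_right Q) fun x hx => ?_
  obtain ⟨p, hp, q, hq, rfl⟩ := mem_sup_of_normal_right.mp (hPQ ▸ hx)
  obtain ⟨c, hc, w, hw, rfl⟩ := mem_sup_of_normal_left.mp (hC.symm ▸ hPQ ▸ mem_sup_left hp)
  have hcP : c ∈ P := by simpa using P.mul_mem hp (P.inv_mem hw.1)
  rw [mul_assoc]
  exact mul_mem_sup ⟨hc, hcP⟩ (Q.mul_mem hw.2 hq)

theorem finiteIndex_of_isOpen [TopologicalSpace G] [SeparatelyContinuousMul G] [CompactSpace G]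
    (U : Subgroup G) (hU : IsOpen (U : Set G)) : U.FiniteIndex :=
  haveI := U.quotient_finite_of_isOpen hU
  finiteIndex_of_finite_quotient

end Subgroup

section Compactness

variable {X : Type*} [TopologicalSpace X] [CompactSpace X]

theorem nonempty_iInter_diff_of_antitone {C : ℕ → Set X} (hC : Antitone C)
    (hclosed : ∀ n, IsClosed (C n)) {U : Set X} (hU : IsOpen U) (hCU : ∀ n, (C n \ U).Nonempty) :
    ((⋂ n, C n) \ U).Nonempty := by
  have hclosed' n : IsClosed (C n \ U) := (hclosed n).sdiff hU
  obtain ⟨x, hx⟩ := IsCompact.nonempty_iInter_of_directed_nonempty_isCompact_isClosed _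
    (Antitone.directed_ge fun _ _ h => Set.sdiff_subset_sdiff_left (hC h)) hCU
    (fun n => (hclosed' n).isCompact) hclosed'
  rw [Set.mem_iInter] at hx
  exact ⟨x, Set.mem_iInter.2 fun n => (hx n).1, (hx 0).2⟩

theorem mem_iInter_mul_iInter_of_antitone [Mul X] [ContinuousMul X] [T1Space X]
    {A B : ℕ → Set X} (hA : Antitone A) (hB : Antitone B) (hAc : ∀ n, IsClosed (A n))
    (hBc : ∀ n, IsClosed (B n)) {x : X} (hx : ∀ n, x ∈ A n * B n) :
    x ∈ (⋂ n, A n) * ⋂ n, B n := by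
  set t : ℕ → Set (X × X) := fun n => A n ×ˢ B n ∩ (fun p => p.1 * p.2) ⁻¹' {x}
  have ht n : IsClosed (t n) :=
    ((hAc n).prod (hBc n)).inter (isClosed_singleton.preimage continuous_mul)
  obtain ⟨⟨a, b⟩, hab⟩ := IsCompact.nonempty_iInter_of_directed_nonempty_isCompact_isClosed t
    (Antitone.directed_ge fun _ _ h => Set.inter_subset_inter_left _ (Set.prod_mono (hA h) (hB h)))
    (fun n => by obtain ⟨a, ha, b, hb, hab⟩ := hx n; exact ⟨(a, b), ⟨ha, hb⟩, hab⟩)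
    (fun n => (ht n).isCompact) ht
  simp only [t, Set.mem_iInter] at hab
  exact ⟨a, Set.mem_iInter.2 fun n => (hab n).1.1, b, Set.mem_iInter.2 fun n => (hab n).1.2,
    (hab 0).2⟩

end Compactness

section JustInfinite

variable {G : Type*} [Group G] [TopologicalSpace G]

theorem iInf_eq_bot_of_strictAnti
    (hJI : ∀ N : Subgroup G, N.Normal → IsClosed (N : Set G) → N ≠ ⊥ → N.FiniteIndex)
    {C : ℕ → Subgroup G} (hC : StrictAnti C) (hnormal : ∀ n, (C n).Normal)
    (hclosed : ∀ n, IsClosed (C n : Set G)) : ⨅ n, C n = ⊥ := by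
  by_contra hne
  have := Subgroup.normal_iInf_normal hnormal
  have := hJI _ inferInstance (by rw [Subgroup.coe_iInf]; exact isClosed_iInter hclosed) hne
  exact Set.infinite_range_of_injective hC.injective
    ((Subgroup.finite_setOf_le_of_finiteIndex _).subset (Set.range_subset_iff.2 (iInf_le C)))

theorem wellFoundedOn_setOf_isClosed_normal_not_le [CompactSpace G]
    (hJI : ∀ N : Subgroup G, N.Normal → IsClosed (N : Set G) → N ≠ ⊥ → N.FiniteIndex)
    {H : Subgroup G} (hH : IsOpen (H : Set G)) :
    {N : Subgroup G | N.Normal ∧ IsClosed (N : Set G) ∧ ¬N ≤ H}.WellFoundedOn (· < ·) := by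
  rw [Set.wellFoundedOn_iff_no_descending_seq]
  intro f hf
  have hanti : StrictAnti f := fun _ _ h => f.map_rel_iff.2 h
  have hbot := iInf_eq_bot_of_strictAnti hJI hanti (fun n => (hf n).1) fun n => (hf n).2.1
  obtain ⟨x, hx, hxH⟩ := nonempty_iInter_diff_of_antitone (C := fun n => (f n : Set G))
    (fun _ _ h => hanti.antitone h) (fun n => (hf n).2.1) hH
    fun n => Set.not_subset.1 (hf n).2.2
  have hx : x ∈ ⨅ n, f n := by rw [← SetLike.mem_coe, Subgroup.coe_iInf]; exact hx
  rw [hbot, Subgroup.mem_bot] at hx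
  exact hxH (hx ▸ H.one_mem)

def HasProperOpenNormalSupplements (N : Subgroup G) : Prop :=
  ∀ U : Subgroup G, U.Normal → IsOpen (U : Set G) → U ≤ N →
    ∃ K : Subgroup G, K.Normal ∧ IsOpen (K : Set G) ∧ K < N ∧ K ⊔ U = N

theorem HasProperOpenNormalSupplements.exists_lt_sup_eq {N : Subgroup G}
    (hN : HasProperOpenNormalSupplements N) {A B : Subgroup G} [A.Normal] [B.Normal]
    (hAo : IsOpen (A : Set G)) (hBo : IsOpen (B : Set G)) (hAB : A ⊔ B = N) :
    ∃ A' : Subgroup G, A'.Normal ∧ IsOpen (A' : Set G) ∧ A' < A ∧ A' ⊔ B = N := by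
  obtain ⟨K, hKn, hKo, hKN, hK⟩ :=
    hN (A ⊓ B) inferInstance (hAo.inter hBo) (hAB ▸ inf_le_left.trans le_sup_left)
  refine ⟨K ⊓ A, inferInstance, hKo.inter hAo, inf_le_right.lt_of_ne fun hKA => hKN.ne ?_,
    Subgroup.inf_sup_eq_of_sup_eq hAB hK⟩
  exact (sup_eq_left.2 (inf_le_left.trans (inf_eq_right.mp hKA))).symm.trans hK

theorem HasProperOpenNormalSupplements.exists_strictAnti_sup_eq {N : Subgroup G}
    (hN : HasProperOpenNormalSupplements N) (hNn : N.Normal) (hNo : IsOpen (N : Set G)) :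
    ∃ A B : ℕ → Subgroup G, StrictAnti A ∧ StrictAnti B ∧ ∀ n, (A n).Normal ∧
      IsOpen (A n : Set G) ∧ (B n).Normal ∧ IsOpen (B n : Set G) ∧ A n ⊔ B n = N := by
  set pairs := {p : Subgroup G × Subgroup G |
    p.1.Normal ∧ IsOpen (p.1 : Set G) ∧ p.2.Normal ∧ IsOpen (p.2 : Set G) ∧ p.1 ⊔ p.2 = N}
  have hstep : ∀ p ∈ pairs, ∃ q ∈ pairs, q.1 < p.1 ∧ q.2 < p.2 := by
    rintro ⟨A, B⟩ ⟨hAn, hAo, hBn, hBo, hAB⟩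
    obtain ⟨A', hA'n, hA'o, hA'A, hA'B⟩ := hN.exists_lt_sup_eq hAo hBo hAB
    obtain ⟨B', hB'n, hB'o, hB'B, hB'A'⟩ :=
      hN.exists_lt_sup_eq hBo hA'o (by rw [sup_comm, hA'B])
    exact ⟨(A', B'), ⟨hA'n, hA'o, hB'n, hB'o, by rw [sup_comm, hB'A']⟩, hA'A, hB'B⟩
  choose! next hnext using hstep
  set p : ℕ → Subgroup G × Subgroup G := fun n => next^[n] (N, N)
  have hp n : p n ∈ pairs := by
    induction n with
    | zero => exact ⟨hNn, hNo, hNn, hNo, sup_idem N⟩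
    | succ n ih => simpa only [p, Function.iterate_succ_apply'] using (hnext _ ih).1
  have hlt n : (p (n + 1)).1 < (p n).1 ∧ (p (n + 1)).2 < (p n).2 := by
    simpa only [p, Function.iterate_succ_apply'] using (hnext _ (hp n)).2
  exact ⟨fun n => (p n).1, fun n => (p n).2, strictAnti_nat_of_succ_lt fun n => (hlt n).1,
    strictAnti_nat_of_succ_lt fun n => (hlt n).2, hp⟩

variable [IsTopologicalGroup G] [CompactSpace G]

theorem HasProperOpenNormalSupplements.eq_bot [T1Space G]
    (hJI : ∀ N : Subgroup G, N.Normal → IsClosed (N : Set G) → N ≠ ⊥ → N.FiniteIndex)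
    {N : Subgroup G} (hN : HasProperOpenNormalSupplements N) (hNn : N.Normal)
    (hNo : IsOpen (N : Set G)) : N = ⊥ := by
  obtain ⟨A, B, hA, hB, hAB⟩ := hN.exists_strictAnti_sup_eq hNn hNo
  have hAc n : IsClosed (A n : Set G) := (A n).isClosed_of_isOpen (hAB n).2.1
  have hBc n : IsClosed (B n : Set G) := (B n).isClosed_of_isOpen (hAB n).2.2.2.1
  have hAbot := iInf_eq_bot_of_strictAnti hJI hA (fun n => (hAB n).1) hAc
  have hBbot := iInf_eq_bot_of_strictAnti hJI hB (fun n => (hAB n).2.2.1) hBc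
  refine eq_bot_iff.2 fun x hx => ?_
  have hx : x ∈ (⋂ n, (A n : Set G)) * ⋂ n, (B n : Set G) :=
    mem_iInter_mul_iInter_of_antitone (fun _ _ h => hA.antitone h) (fun _ _ h => hB.antitone h)
      hAc hBc fun n => by
        have := (hAB n).2.2.1
        rw [← Subgroup.mul_normal, (hAB n).2.2.2.2]
        exact hx
  rwa [← Subgroup.coe_iInf, ← Subgroup.coe_iInf, hAbot, hBbot, Subgroup.coe_bot,
    Set.singleton_mul_singleton, one_mul] at hx

def openNormalNotLE (H : Subgroup G) : Set (Subgroup G) :=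
  {K | K.Normal ∧ IsOpen (K : Set G) ∧ ¬K ≤ H}

theorem hasProperOpenNormalSupplements_of_minimal {H N : Subgroup G}
    (hN : {K ∈ openNormalNotLE H | K ≤ N}.Infinite)
    (hmin : ∀ M : Subgroup G, M.Normal → IsOpen (M : Set G) → M < N →
      {K ∈ openNormalNotLE H | K ≤ M}.Finite) :
    HasProperOpenNormalSupplements N := by
  intro U hUn hUo hUN
  have := U.finiteIndex_of_isOpen hUo
  by_contra! hnone
  -- Otherwise each `K < N` counted by `hN` lies below `K ⊔ U`, one of the finitely many normal
  -- `M` with `U ≤ M < N`, each of which has only finitely many such `K` below it.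
  set 𝒜 := {M : Subgroup G | U ≤ M ∧ M.Normal ∧ M < N}
  have h𝒜 : 𝒜.Finite := U.finite_setOf_le_of_finiteIndex.subset fun M hM => hM.1
  refine hN (((h𝒜.biUnion fun M hM => hmin M hM.2.1 (Subgroup.isOpen_mono hM.1 hUo) hM.2.2).insert
    N).subset ?_)
  rintro K ⟨hKS, hKN⟩
  obtain rfl | hKlt := hKN.eq_or_lt
  · exact Set.mem_insert _ _
  have := hKS.1
  exact Set.mem_insert_of_mem _ <| Set.mem_biUnion (x := K ⊔ U)
    ⟨le_sup_right, inferInstance, (sup_le hKN hUN).lt_of_ne (hnone K hKS.1 hKS.2.1 hKlt)⟩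
    ⟨hKS, le_sup_left⟩

theorem exists_hasProperOpenNormalSupplements
    (hJI : ∀ N : Subgroup G, N.Normal → IsClosed (N : Set G) → N ≠ ⊥ → N.FiniteIndex)
    {H : Subgroup G} (hH : IsOpen (H : Set G)) (hS : (openNormalNotLE H).Infinite) :
    ∃ N : Subgroup G, N.Normal ∧ IsOpen (N : Set G) ∧ ¬N ≤ H ∧
      HasProperOpenNormalSupplements N := by
  set 𝒩 := {N : Subgroup G | N.Normal ∧ IsOpen (N : Set G) ∧
    {K ∈ openNormalNotLE H | K ≤ N}.Infinite}
  have h𝒩 : 𝒩 ⊆ {N : Subgroup G | N.Normal ∧ IsClosed (N : Set G) ∧ ¬N ≤ H} := by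
    rintro N ⟨hNn, hNo, hNinf⟩
    obtain ⟨K, ⟨-, -, hKH⟩, hKN⟩ := hNinf.nonempty
    exact ⟨hNn, N.isClosed_of_isOpen hNo, fun hNH => hKH (hKN.trans hNH)⟩
  have htop : ⊤ ∈ 𝒩 := ⟨inferInstance, isOpen_univ, by simpa using hS⟩
  obtain ⟨N, ⟨hNn, hNo, hNinf⟩, hmin⟩ :=
    ((wellFoundedOn_setOf_isClosed_normal_not_le hJI hH).subset h𝒩).exists_minimal ⟨⊤, htop⟩
  refine ⟨N, hNn, hNo, (h𝒩 ⟨hNn, hNo, hNinf⟩).2.2,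
    hasProperOpenNormalSupplements_of_minimal hNinf fun M hMn hMo hMN => ?_⟩
  by_contra hinf
  exact hMN.not_ge (hmin ⟨hMn, hMo, hinf⟩ hMN.le)

variable [TotallyDisconnectedSpace G]

theorem sInf_setOf_isOpen_eq_bot : sInf {H : Subgroup G | IsOpen (H : Set G)} = ⊥ := by
  simpa using (ProfiniteGrp.closedSubgroup_eq_sInf_open ⟨⊥, isClosed_singleton⟩).symm

theorem isOpen_of_finite_image_sup {N : Subgroup G} (hNc : IsClosed (N : Set G))
    (hfin : ((N ⊔ ·) '' {U : Subgroup G | U.Normal ∧ IsOpen (U : Set G)}).Finite) :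
    IsOpen (N : Set G) := by
  have hN : N = sInf ((N ⊔ ·) '' {U : Subgroup G | U.Normal ∧ IsOpen (U : Set G)}) := by
    refine le_antisymm (le_sInf ?_) ?_
    · rintro _ ⟨U, -, rfl⟩
      exact le_sup_left
    calc _ ≤ sInf {M : Subgroup G | IsOpen (M : Set G) ∧ N ≤ M} := by
          refine le_sInf fun M ⟨hMo, hNM⟩ => ?_
          obtain ⟨U, hUM⟩ :=
            ProfiniteGrp.exist_openNormalSubgroup_sub_open_nhds_of_one hMo M.one_mem
          exact sInf_le_of_le (b := N ⊔ U) ⟨U, ⟨U.isNormal', U.isOpen'⟩, rfl⟩ (sup_le hNM hUM)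
      _ = N := (ProfiniteGrp.closedSubgroup_eq_sInf_open ⟨N, hNc⟩).symm
  rw [hN, Subgroup.coe_sInf]
  exact hfin.isOpen_biInter fun _ ⟨U, ⟨_, hUo⟩, hM⟩ => hM ▸ Subgroup.isOpen_mono le_sup_right hUo

end JustInfinite

theorem generalized_obliquity_general (G : Type*) [Group G] [TopologicalSpace G]
    [IsTopologicalGroup G] [CompactSpace G] [TotallyDisconnectedSpace G] :
    List.TFAE
      [ ∀ N : Subgroup G, N.Normal → IsClosed (N : Set G) → N ≠ ⊥ → N.FiniteIndex,
        ∀ H : Subgroup G, IsOpen (H : Set G) →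
          {K : Subgroup G | K.Normal ∧ IsOpen (K : Set G) ∧ ¬ K ≤ H}.Finite,
        ∃ F : Set (Subgroup G), (∀ H ∈ F, IsOpen (H : Set G)) ∧ sInf F = ⊥ ∧
          ∀ H ∈ F, {K : Subgroup G | K.Normal ∧ IsOpen (K : Set G) ∧ ¬ K ≤ H}.Finite ] := by
  tfae_have 1 → 2 := by
    intro hJI H hH
    by_contra hS
    obtain ⟨N, hNn, hNo, hNH, hN⟩ := exists_hasProperOpenNormalSupplements hJI hH hS
    exact hNH (hN.eq_bot hJI hNn hNo ▸ bot_le)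
  tfae_have 2 → 3 := fun h =>
    ⟨{H | IsOpen (H : Set G)}, fun _ hH => hH, sInf_setOf_isOpen_eq_bot, h⟩
  tfae_have 3 → 1 := by
    rintro ⟨F, -, hFbot, hFfin⟩ N hNn hNc hN
    obtain ⟨H, hHF, hNH⟩ : ∃ H ∈ F, ¬N ≤ H := by
      by_contra! hle
      exact hN (eq_bot_iff.2 (hFbot ▸ le_sInf hle))
    refine N.finiteIndex_of_isOpen (isOpen_of_finite_image_sup hNc ((hFfin H hHF).subset ?_))
    rintro _ ⟨U, ⟨hUn, hUo⟩, rfl⟩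
    exact ⟨Subgroup.sup_normal N U, Subgroup.isOpen_mono le_sup_right hUo,
      fun hle => hNH (le_sup_left.trans hle)⟩
  tfae_finish

/-- **Generalised obliquity theorem** (Theorem A).  Let `G` be an infinite profinite
group.  Then the following are equivalent: (i) `G` is just infinite (every nontrivial
closed normal subgroup has finite index); (ii) for every open subgroup `H` of `G` the
set of open normal subgroups of `G` not contained in `H` is finite; (iii) there is a
family `F` of open subgroups of `G` with trivial intersection such that for every
`H ∈ F` the set of open normal subgroups of `G` not contained in `H` is finite. -/
theorem generalized_obliquity (G : Type*) [Group G] [TopologicalSpace G]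
    [IsTopologicalGroup G] [CompactSpace G] [T2Space G] [TotallyDisconnectedSpace G]
    [Infinite G] :
    List.TFAE
      [ ∀ N : Subgroup G, N.Normal → IsClosed (N : Set G) → N ≠ ⊥ → N.FiniteIndex,
        ∀ H : Subgroup G, IsOpen (H : Set G) →
          {K : Subgroup G | K.Normal ∧ IsOpen (K : Set G) ∧ ¬ K ≤ H}.Finite,
        ∃ F : Set (Subgroup G), (∀ H ∈ F, IsOpen (H : Set G)) ∧ sInf F = ⊥ ∧
          ∀ H ∈ F, {K : Subgroup G | K.Normal ∧ IsOpen (K : Set G) ∧ ¬ K ≤ H}.Finite ] :=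
  generalized_obliquity_general G
end

section
/- Let G be a just infinite profinite group and let n be a positive integer. Then G has only finitely many open subgroups of index n. -/
/-- A topological group is just infinite if it is infinite and every nontrivial
closed normal subgroup has finite index. -/
def JustInfinite (G : Type*) [Group G] [TopologicalSpace G] : Prop :=
  Infinite G ∧ ∀ N : Subgroup G, N.Normal → IsClosed (N : Set G) → N ≠ ⊥ → N.FiniteIndex

/-!
Every nontrivial element `x` of a just infinite group lies in only finitely many closed normal
subgroups: they all contain the closed normal subgroup generated by `x`, which has finite index.
Among any `m + 1` distinct elements, two are congruent modulo a given normal subgroup of index at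
most `m`, so each such subgroup contains one of finitely many nontrivial quotients `gᵢ⁻¹ gⱼ`;
hence there are only finitely many closed normal subgroups of index at most `m`. An open
subgroup of index `n` contains its normal core, which is closed of index dividing `n!`, and only
finitely many subgroups contain a given subgroup of finite index.
-/

open Nat

namespace Subgroup

variable {G : Type*} [Group G]

theorem finite_setOf_le_of_finiteIndex_s1 (K : Subgroup G) [K.Normal] [K.FiniteIndex] :
    {H : Subgroup G | K ≤ H}.Finite := by
  have : Finite (G ⧸ K) := K.finite_quotient_of_finiteIndex
  refine (Set.finite_range fun L : Subgroup (G ⧸ K) => L.comap (QuotientGroup.mk' K)).subset ?_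
  intro H hKH
  refine ⟨H.map (QuotientGroup.mk' K), ?_⟩
  dsimp only
  rw [comap_map_eq, QuotientGroup.ker_mk', sup_of_le_left hKH]

theorem exists_ne_inv_mul_mem_of_index_lt {ι : Type*} [Finite ι] (K : Subgroup G)
    [K.FiniteIndex] (f : ι → G) (h : K.index < Nat.card ι) :
    ∃ i j, i ≠ j ∧ (f i)⁻¹ * f j ∈ K := by
  have : Finite (G ⧸ K) := K.finite_quotient_of_finiteIndex
  by_contra! hf
  have hinj : Function.Injective fun i => (f i : G ⧸ K) := fun i j hij =>
    not_imp_comm.mp (hf i j) (not_not_intro (QuotientGroup.eq.mp hij))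
  exact (Nat.card_le_card_of_injective _ hinj).not_gt (K.index_eq_card ▸ h)

theorem index_normalCore_dvd_factorial (H : Subgroup G) [H.FiniteIndex] :
    H.normalCore.index ∣ H.index ! := by
  have : Finite (G ⧸ H) := H.finite_quotient_of_finiteIndex
  rw [normalCore_eq_ker, index_ker, index_eq_card, ← Nat.card_perm]
  exact card_subgroup_dvd_card (MulAction.toPermHom G (G ⧸ H)).range

end Subgroup

namespace JustInfinite

open Subgroup

variable {G : Type*} [Group G] [TopologicalSpace G] [IsTopologicalGroup G]

theorem finite_setOf_normal_isClosed_mem (hG : JustInfinite G) {x : G} (hx : x ≠ 1) :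
    {N : Subgroup G | N.Normal ∧ IsClosed (N : Set G) ∧ x ∈ N}.Finite := by
  set W := (normalClosure {x}).topologicalClosure
  have hxW : x ∈ W := le_topologicalClosure _ (subset_normalClosure rfl)
  have : W.Normal := is_normal_topologicalClosure _
  have : W.FiniteIndex := hG.2 W this (isClosed_topologicalClosure _)
    fun hW => hx (mem_bot.mp (hW ▸ hxW))
  refine W.finite_setOf_le_of_finiteIndex_s1.subset ?_
  rintro N ⟨hN, hNclosed, hxN⟩
  exact topologicalClosure_minimal _ (normalClosure_le_normal (Set.singleton_subset_iff.2 hxN))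
    hNclosed

theorem finite_setOf_normal_isClosed_index_le (hG : JustInfinite G) (m : ℕ) :
    {N : Subgroup G | N.Normal ∧ IsClosed (N : Set G) ∧ N.FiniteIndex ∧ N.index ≤ m}.Finite := by
  have := hG.1
  let g : Fin (m + 1) ↪ G := Fin.valEmbedding.trans (Infinite.natEmbedding G)
  have hfin : (⋃ p : {p : Fin (m + 1) × Fin (m + 1) // p.1 ≠ p.2},
      {N : Subgroup G | N.Normal ∧ IsClosed (N : Set G) ∧ (g p.1.1)⁻¹ * g p.1.2 ∈ N}).Finite :=
    Set.finite_iUnion fun p => hG.finite_setOf_normal_isClosed_mem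
      (mt inv_mul_eq_one.mp (g.injective.ne p.2))
  refine hfin.subset ?_
  rintro N ⟨hN, hNclosed, hNfin, hNindex⟩
  obtain ⟨i, j, hij, hmem⟩ := N.exists_ne_inv_mul_mem_of_index_lt g (by simpa using hNindex)
  exact Set.mem_iUnion.mpr ⟨⟨(i, j), hij⟩, hN, hNclosed, hmem⟩

end JustInfinite

theorem finitely_many_open_subgroups_of_index_general (G : Type*) [Group G] [TopologicalSpace G]
    [IsTopologicalGroup G]
    (hG : JustInfinite G) (n : ℕ) (hn : 0 < n) :
    {H : Subgroup G | IsOpen (H : Set G) ∧ H.index = n}.Finite := by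
  refine ((hG.finite_setOf_normal_isClosed_index_le n !).biUnion
    fun N ⟨hN, _, hNfin, _⟩ => N.finite_setOf_le_of_finiteIndex_s1).subset ?_
  rintro H ⟨hopen, hindex⟩
  have : H.FiniteIndex := ⟨hindex ▸ hn.ne'⟩
  have hcore_index : H.normalCore.index ≤ n ! :=
    Nat.le_of_dvd (factorial_pos n) (hindex ▸ H.index_normalCore_dvd_factorial)
  exact Set.mem_biUnion (x := H.normalCore)
    ⟨H.normalCore_normal, H.normalCore_isClosed (H.isClosed_of_isOpen hopen), inferInstance,
      hcore_index⟩ H.normalCore_le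

/-- A just infinite profinite group has only finitely many open subgroups of
any given index `n > 0`. -/
theorem finitely_many_open_subgroups_of_index (G : Type*) [Group G] [TopologicalSpace G]
    [IsTopologicalGroup G] [CompactSpace G] [T2Space G] [TotallyDisconnectedSpace G]
    (hG : JustInfinite G) (n : ℕ) (hn : 0 < n) :
    {H : Subgroup G | IsOpen (H : Set G) ∧ H.index = n}.Finite :=
  finitely_many_open_subgroups_of_index_general G hG n hn
end

section
/- Let G be a just infinite profinite group, and let H be an infinite profinite group such that every finite continuous quotient of H is isomorphic to some finite continuous quotient of G. Then G and H are isomorphic as topological groups. -/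
/-!
A nontrivial element of a just infinite group lies in only finitely many closed normal subgroups:
their intersection is closed, normal and nontrivial, hence of finite index. Since any `n + 1`
elements contain two in the same coset of a subgroup of index `n`, it follows that there are only
finitely many closed normal subgroups of index `n`, and hence only finitely many continuous
epimorphisms `G → H ⧸ N` for each open normal `N ≤ H`; by hypothesis there is at least one.
König's lemma gives a compatible family of them, which assembles into a continuous homomorphism
`G → H = lim H ⧸ N`. Its image is compact and dense, so it is onto, and its kernel is a closed
normal subgroup of infinite index, so it is trivial.
-/

theorem Subgroup.finite_setOf_le_of_finiteIndex_s2 {G : Type*} [Group G] (K : Subgroup G)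
    [K.Normal] [K.FiniteIndex] : {M : Subgroup G | K ≤ M}.Finite :=
  Set.finite_coe_iff.mp (.of_equiv _ (QuotientGroup.comapMk'OrderIso K).toEquiv)

theorem Subgroup.exists_ne_inv_mul_mem_of_index_lt_s2 {G ι : Type*} [Group G] [Finite ι]
    (M : Subgroup G) [M.FiniteIndex] (g : ι → G) (h : M.index < Nat.card ι) :
    ∃ k l, k ≠ l ∧ (g k)⁻¹ * g l ∈ M := by
  obtain ⟨k, l, hkl, hne⟩ := Function.not_injective_iff.mp fun hinj =>
    (Nat.card_le_card_of_injective (fun i => (g i : G ⧸ M)) hinj).not_gt h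
  exact ⟨k, l, hne, QuotientGroup.eq.mp hkl⟩

theorem MonoidHom.finite_setOf_le_ker {G Q : Type*} [Group G] [Group Q] [Finite Q]
    (M : Subgroup G) [M.Normal] [M.FiniteIndex] : {φ : G →* Q | M ≤ φ.ker}.Finite := by
  have : Finite (G ⧸ M →* Q) := .of_injective _ DFunLike.coe_injective
  exact (Set.finite_range fun ψ : G ⧸ M →* Q => ψ.comp (QuotientGroup.mk' M)).subset
    fun φ hφ => ⟨QuotientGroup.lift M φ hφ, rfl⟩

namespace JustInfinite

variable {G : Type*} [Group G] [TopologicalSpace G]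

theorem finite_setOf_mem (hG : JustInfinite G) {b : G} (hb : b ≠ 1) :
    {M : Subgroup G | M.Normal ∧ IsClosed (M : Set G) ∧ b ∈ M}.Finite := by
  set S := {M : Subgroup G | M.Normal ∧ IsClosed (M : Set G) ∧ b ∈ M}
  let K : Subgroup G := ⨅ M : S, M.1
  have hbK : b ∈ K := Subgroup.mem_iInf.mpr fun M => M.2.2.2
  have hK_normal : K.Normal := Subgroup.normal_iInf_normal fun M => M.2.1
  have hK_closed : IsClosed (K : Set G) := by
    rw [Subgroup.coe_iInf]
    exact isClosed_iInter fun M => M.2.2.1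
  have := hG.2 K hK_normal hK_closed fun h => hb (Subgroup.mem_bot.mp (h ▸ hbK))
  exact K.finite_setOf_le_of_finiteIndex_s2.subset fun M hM => iInf_le (fun M : S => M.1) ⟨M, hM⟩

theorem finite_setOf_index_eq (hG : JustInfinite G) (n : ℕ) :
    {M : Subgroup G | M.Normal ∧ IsClosed (M : Set G) ∧ M.index = n}.Finite := by
  rcases n.eq_zero_or_pos with rfl | hn
  -- `index = 0` encodes infinite index, which only `⊥` can have
  · refine (Set.finite_singleton ⊥).subset fun M ⟨hMn, hMc, hM0⟩ => ?_
    by_contra hM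
    exact (hG.2 M hMn hMc hM).index_ne_zero hM0
  have : Infinite G := hG.1
  let g : Fin (n + 1) ↪ G := Fin.valEmbedding.trans (Infinite.natEmbedding G)
  refine ((Set.toFinite {p : Fin (n + 1) × Fin (n + 1) | p.1 ≠ p.2}).biUnion fun p hp =>
    hG.finite_setOf_mem (b := (g p.1)⁻¹ * g p.2)
      fun h => hp (g.injective (inv_mul_eq_one.mp h))).subset ?_
  rintro M ⟨hMn, hMc, hMi⟩
  have : M.FiniteIndex := ⟨hMi.trans_ne hn.ne'⟩
  obtain ⟨k, l, hkl, hmem⟩ := M.exists_ne_inv_mul_mem_of_index_lt_s2 g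
    (by rw [Nat.card_fin, hMi]; exact n.lt_succ_self)
  exact Set.mem_biUnion (x := (k, l)) hkl ⟨hMn, hMc, hmem⟩

theorem injective_of_surjective {H : Type*} [Group H] [TopologicalSpace H] [T1Space H]
    [Infinite H] (hG : JustInfinite G) (f : G →* H) (hf : Continuous f)
    (hsurj : Function.Surjective f) : Function.Injective f := by
  rw [← f.ker_eq_bot_iff]
  by_contra hker
  have := hG.2 f.ker f.normal_ker (isClosed_singleton.preimage hf) hker
  have : Finite H := .of_equiv _ (QuotientGroup.quotientKerEquivOfSurjective f hsurj).toEquiv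
  exact not_finite H

end JustInfinite

/-- Continuous epimorphisms onto a discrete group `Q`: for a homomorphism to a discrete group,
continuity amounts to an open kernel. -/
def OpenKerEpi (G Q : Type*) [Group G] [TopologicalSpace G] [Group Q] : Type _ :=
  {φ : G →* Q // Function.Surjective φ ∧ IsOpen (φ.ker : Set G)}

namespace OpenKerEpi

variable {G Q Q' : Type*} [Group G] [TopologicalSpace G] [Group Q] [Group Q']

theorem ext {φ ψ : OpenKerEpi G Q} (h : ∀ x, φ.1 x = ψ.1 x) : φ = ψ :=
  Subtype.ext (MonoidHom.ext h)

def comp [IsTopologicalGroup G] (φ : OpenKerEpi G Q) (ψ : Q →* Q')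
    (hψ : Function.Surjective ψ) : OpenKerEpi G Q' :=
  ⟨ψ.comp φ.1, hψ.comp φ.2.1,
    Subgroup.isOpen_mono (MonoidHom.ker_le_comap φ.1 ψ.ker) φ.2.2⟩

theorem nonempty_of_mulEquiv {M : Subgroup G} [M.Normal] (hM : IsOpen (M : Set G))
    (e : G ⧸ M ≃* Q) : Nonempty (OpenKerEpi G Q) :=
  ⟨⟨(e : G ⧸ M →* Q).comp (QuotientGroup.mk' M),
    e.surjective.comp (QuotientGroup.mk'_surjective M),
    by rwa [MonoidHom.ker_mulEquiv_comp, QuotientGroup.ker_mk']⟩⟩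

end OpenKerEpi

theorem JustInfinite.finite_openKerEpi {G Q : Type*} [Group G] [TopologicalSpace G]
    [IsTopologicalGroup G] [Group Q] [Finite Q] (hG : JustInfinite G) :
    Finite (OpenKerEpi G Q) := by
  have hQ : Nat.card Q ≠ 0 := Nat.card_pos.ne'
  refine Set.Finite.to_subtype (((hG.finite_setOf_index_eq (Nat.card Q)).biUnion
    (t := fun M => {φ : G →* Q | M ≤ φ.ker}) fun M ⟨_, _, hM⟩ => ?_).subset
    fun φ ⟨hsurj, hopen⟩ => ?_)
  · have : M.FiniteIndex := ⟨hM ▸ hQ⟩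
    exact MonoidHom.finite_setOf_le_ker M
  · refine Set.mem_biUnion (x := φ.ker)
      ⟨φ.normal_ker, Subgroup.isClosed_of_isOpen _ hopen, ?_⟩ (le_refl φ.ker)
    rw [Subgroup.index_ker, MonoidHom.range_eq_top.mpr hsurj, Subgroup.card_top]

open CategoryTheory

def openKerEpiSystem (G H : Type*) [Group G] [TopologicalSpace G] [IsTopologicalGroup G]
    [Group H] [TopologicalSpace H] : OpenNormalSubgroup H ⥤ Type _ where
  obj N := OpenKerEpi G (H ⧸ N.toSubgroup)
  map f := TypeCat.ofHom fun φ => φ.comp (QuotientGroup.map _ _ (.id H) (leOfHom f))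
    (QuotientGroup.map_surjective_of_surjective _ _ _ QuotientGroup.mk_surjective _)
  map_id N := by
    ext : 2; funext φ
    exact OpenKerEpi.ext fun x => QuotientGroup.map_id_apply N.toSubgroup (x := φ.1 x)
  map_comp {N M P} f g := by
    ext : 2; funext φ
    exact OpenKerEpi.ext fun x => (QuotientGroup.map_map N.toSubgroup M.toSubgroup P.toSubgroup
      (.id H) (.id H) (leOfHom f) (leOfHom g) (x := φ.1 x)).symm

section Profinite

variable {H : Type*} [Group H] [TopologicalSpace H] [IsTopologicalGroup H] [CompactSpace H]
  [TotallyDisconnectedSpace H]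

theorem exists_forall_mk_eq_of_compatible (v : ∀ N : OpenNormalSubgroup H, H ⧸ N.toSubgroup)
    (hv : ∀ (N M : OpenNormalSubgroup H) (h : N ≤ M),
      QuotientGroup.map _ _ (.id H) h (v N) = v M) :
    ∃ x : H, ∀ N : OpenNormalSubgroup H, (x : H ⧸ N.toSubgroup) = v N := by
  obtain ⟨x, hx⟩ :=
    (ProfiniteGrp.of H).toLimit_surjective ⟨v, fun N M f => hv N M (leOfHom f)⟩
  exact ⟨x, fun N => congrFun (congrArg Subtype.val hx) N⟩

theorem eq_of_forall_mk_eq {x y : H}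
    (h : ∀ N : OpenNormalSubgroup H, (x : H ⧸ N.toSubgroup) = y) : x = y :=
  (ProfiniteGrp.of H).toLimit_injective (Subtype.ext (funext h))

variable {G : Type*} [Group G] [TopologicalSpace G]

theorem exists_continuous_lift_of_compatible [IsTopologicalGroup G]
    (u : ∀ N : OpenNormalSubgroup H, G →* H ⧸ N.toSubgroup)
    (hu_open : ∀ N, IsOpen ((u N).ker : Set G))
    (hu : ∀ (N M : OpenNormalSubgroup H) (h : N ≤ M),
      (QuotientGroup.map _ _ (.id H) h).comp (u N) = u M) :
    ∃ f : G →* H, Continuous f ∧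
      ∀ N : OpenNormalSubgroup H, (QuotientGroup.mk' N.toSubgroup).comp f = u N := by
  choose f hf using fun g => exists_forall_mk_eq_of_compatible (fun N => u N g)
    fun N M h => DFunLike.congr_fun (hu N M h) g
  let F : G →* H :=
    { toFun := f
      map_one' := eq_of_forall_mk_eq fun N => by rw [hf, map_one]; rfl
      map_mul' := fun a b => eq_of_forall_mk_eq fun N => by
        rw [hf, map_mul, QuotientGroup.mk_mul, hf, hf] }
  refine ⟨F, continuous_of_continuousAt_one F ?_, fun N => MonoidHom.ext fun g => hf g N⟩
  rw [ContinuousAt, map_one]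
  intro U hU
  obtain ⟨V, hVU, hV, h1V⟩ := mem_nhds_iff.mp hU
  obtain ⟨N, hN⟩ := ProfiniteGrp.exist_openNormalSubgroup_sub_open_nhds_of_one hV h1V
  refine Filter.mem_map.mpr
    (Filter.mem_of_superset ((hu_open N).mem_nhds (one_mem _)) fun g hg => hVU (hN ?_))
  rw [SetLike.mem_coe, MonoidHom.mem_ker, ← hf g N] at hg
  exact (QuotientGroup.eq_one_iff _).mp hg

theorem surjective_of_forall_surjective_mk_comp [CompactSpace G] (f : G →* H)
    (hf : Continuous f)
    (h : ∀ N : OpenNormalSubgroup H,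
      Function.Surjective ((QuotientGroup.mk' N.toSubgroup).comp f)) :
    Function.Surjective f := by
  have hdense : DenseRange f := by
    refine dense_iff_inter_open.mpr fun U hU ⟨y, hy⟩ => ?_
    obtain ⟨N, hN⟩ := ProfiniteGrp.exist_openNormalSubgroup_sub_open_nhds_of_one
      (hU.preimage (continuous_const_mul y)) (by simpa using hy)
    obtain ⟨g, hg⟩ := h N (y : H ⧸ N.toSubgroup)
    refine ⟨f g, ?_, g, rfl⟩
    simpa using hN (QuotientGroup.eq.mp hg.symm)
  rw [← Set.range_eq_univ, ← (isCompact_range hf).isClosed.closure_eq, hdense.closure_range]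

end Profinite

theorem iso_of_finite_quotients_general (G H : Type*) [Group G] [TopologicalSpace G]
    [IsTopologicalGroup G] [CompactSpace G]
    [Group H] [TopologicalSpace H] [IsTopologicalGroup H] [CompactSpace H]
    [TotallyDisconnectedSpace H] [Infinite H]
    (hG : JustInfinite G)
    (hquot : ∀ N : Subgroup H, ∀ _hN : N.Normal, IsOpen (N : Set H) →
      ∃ M : Subgroup G, ∃ _hM : M.Normal, IsOpen (M : Set G) ∧
        Nonempty ((H ⧸ N) ≃* (G ⧸ M))) :
    ∃ e : G ≃* H, Continuous ⇑e ∧ Continuous ⇑e.symm := by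
  have : Nonempty (OpenNormalSubgroup H) :=
    ⟨{ toOpenSubgroup := ⊤, isNormal' := inferInstanceAs (⊤ : Subgroup H).Normal }⟩
  have (N : OpenNormalSubgroup H) : Finite ((openKerEpiSystem G H).obj N) :=
    hG.finite_openKerEpi
  have (N : OpenNormalSubgroup H) : Nonempty ((openKerEpiSystem G H).obj N) := by
    obtain ⟨M, _, hM, ⟨e⟩⟩ := hquot N N.isNormal' N.isOpen'
    exact OpenKerEpi.nonempty_of_mulEquiv hM e.symm
  obtain ⟨u, hu⟩ := nonempty_sections_of_finite_cofiltered_system (openKerEpiSystem G H)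
  obtain ⟨f, hf, hfu⟩ := exists_continuous_lift_of_compatible (fun N => (u N).1)
    (fun N => (u N).2.2) fun N M h => congrArg Subtype.val (hu (homOfLE h))
  have hsurj := surjective_of_forall_surjective_mk_comp f hf fun N => hfu N ▸ (u N).2.1
  let e := MulEquiv.ofBijective f ⟨hG.injective_of_surjective f hf hsurj, hsurj⟩
  exact ⟨e, hf, (hf.homeoOfEquivCompactToT2 (f := e.toEquiv)).symm.continuous⟩

/-- If `G` is a just infinite profinite group and `H` is an infinite profinite group
such that every finite continuous quotient of `H` (i.e. quotient by an open normal
subgroup) is isomorphic to some finite continuous quotient of `G`, then `G ≅ H` as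
topological groups. -/
theorem iso_of_finite_quotients (G H : Type*) [Group G] [TopologicalSpace G]
    [IsTopologicalGroup G] [CompactSpace G] [T2Space G] [TotallyDisconnectedSpace G]
    [Group H] [TopologicalSpace H] [IsTopologicalGroup H] [CompactSpace H] [T2Space H]
    [TotallyDisconnectedSpace H] [Infinite H]
    (hG : JustInfinite G)
    (hquot : ∀ N : Subgroup H, ∀ _hN : N.Normal, IsOpen (N : Set H) →
      ∃ M : Subgroup G, ∃ _hM : M.Normal, IsOpen (M : Set G) ∧
        Nonempty ((H ⧸ N) ≃* (G ⧸ M))) :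
    ∃ e : G ≃* H, Continuous ⇑e ∧ Continuous ⇑e.symm :=
  iso_of_finite_quotients_general G H hG hquot
end

section
/- Let G be a profinite group. Then G is finite or just infinite if and only if OI_n(G) has finite index in G for every positive integer n (equivalently, if and only if there is a function η : ℕ → ℕ with ob_G(n) ≤ η(n) for all n). -/
/-- The oblique core `Ob_G(H) = H ∩ ⋂ {K ⊴_o G ∣ K ≰ H}`. -/
def obliqueCore {G : Type*} [Group G] [TopologicalSpace G] (H : Subgroup G) : Subgroup G :=
  H ⊓ ⨅ (K : Subgroup G) (_ : K.Normal ∧ IsOpen (K : Set G) ∧ ¬ K ≤ H), K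

/-- `I⊲_n(G)`: the intersection of all open normal subgroups of `G` of index at
most `n`. -/
def normalIndexCap (G : Type*) [Group G] [TopologicalSpace G] (n : ℕ) : Subgroup G :=
  ⨅ (K : Subgroup G) (_ : K.Normal ∧ IsOpen (K : Set G) ∧ K.index ≤ n), K

/-- `OI_n(G) = Ob_G(I⊲_n(G))`. -/
def OI (G : Type*) [Group G] [TopologicalSpace G] (n : ℕ) : Subgroup G :=
  obliqueCore (normalIndexCap G n)

/-- The generalised obliquity function `ob_G(n) = |G : OI_n(G)|`, with values in
`Cardinal` so that infinite index is recorded faithfully. -/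
noncomputable def obFun (G : Type*) [Group G] [TopologicalSpace G] (n : ℕ) : Cardinal :=
  Cardinal.mk (G ⧸ OI G n)

/-! In a just infinite profinite group the closed normal closure `⟨⟨y⟩⟩` of every `y ≠ 1` is
open. Fix a clopen set `C` avoiding `1`. By Zorn's lemma and compactness every `⟨⟨y⟩⟩`, `y ∈ C`,
contains a minimal member of `{⟨⟨y⟩⟩ | y ∈ C}`; two minimal members containing a common point of
`C` coincide, so near each point of `C` all minimal members agree, and by compactness there are
only finitely many. Their intersection is an open subgroup contained in every closed normal
subgroup meeting `C`. Taking `C = G \ H` shows that `Ob_G(H)` is open for every open `H`. If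
`U` is open normal of index `> n`, then `Ob_G(U) ≤ I⊲_n(G)`, so the closed subgroup `I⊲_n(G)` is
open, and hence so is `OI_n(G)`.

Conversely, if `N` is closed normal and `N ≰ K` for an open normal `K`, then the normal core of
every open subgroup containing `N` is an open normal subgroup not contained in `I⊲_{|G:K|}(G)`,
so `OI_{|G:K|}(G) ≤ N`; thus nontrivial closed normal subgroups are open. -/

theorem Subgroup.exists_mk_quotient_le_natCast_iff {G : Type*} [Group G] {H : Subgroup G} :
    (∃ m : ℕ, Cardinal.mk (G ⧸ H) ≤ m) ↔ H.FiniteIndex := by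
  refine ⟨fun ⟨m, hm⟩ => ?_, fun _ => ⟨H.index, by rw [H.index_eq_card, Nat.cast_card]⟩⟩
  have := Cardinal.lt_aleph0_iff_finite.mp (hm.trans_lt Cardinal.natCast_lt_aleph0)
  exact Subgroup.finiteIndex_of_finite_quotient

section

variable {G : Type*} [Group G] [TopologicalSpace G]

theorem normalIndexCap_le {K : Subgroup G} [K.Normal] (hK : IsOpen (K : Set G)) :
    normalIndexCap G K.index ≤ K :=
  iInf₂_le K ⟨inferInstance, hK, le_rfl⟩

variable [IsTopologicalGroup G]

theorem isClosed_normalIndexCap (n : ℕ) : IsClosed (normalIndexCap G n : Set G) := by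
  simp only [normalIndexCap, Subgroup.coe_iInf]
  exact isClosed_iInter fun K => isClosed_iInter fun hK => K.isClosed_of_isOpen hK.2.1

def closedNormalClosure (y : G) : Subgroup G :=
  (Subgroup.normalClosure {y}).topologicalClosure

instance closedNormalClosure_normal (y : G) : (closedNormalClosure y).Normal :=
  Subgroup.is_normal_topologicalClosure _

theorem isClosed_closedNormalClosure (y : G) : IsClosed (closedNormalClosure y : Set G) :=
  Subgroup.isClosed_topologicalClosure _

theorem mem_closedNormalClosure_self (y : G) : y ∈ closedNormalClosure y :=
  Subgroup.le_topologicalClosure _ (Subgroup.subset_normalClosure rfl)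

theorem closedNormalClosure_le_iff {N : Subgroup G} [N.Normal] (hN : IsClosed (N : Set G))
    {y : G} : closedNormalClosure y ≤ N ↔ y ∈ N :=
  ⟨fun h => h (mem_closedNormalClosure_self y), fun hy =>
    Subgroup.topologicalClosure_minimal _
      (Subgroup.normalClosure_le_normal (Set.singleton_subset_iff.mpr hy)) hN⟩

theorem closedNormalClosure_le_sup {U : Subgroup G} [U.Normal] (hU : IsOpen (U : Set G))
    {x y : G} (h : y⁻¹ * x ∈ U) : closedNormalClosure x ≤ closedNormalClosure y ⊔ U := by
  have := Subgroup.sup_normal (closedNormalClosure y) U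
  rw [closedNormalClosure_le_iff
    (Subgroup.isClosed_of_isOpen _ (Subgroup.isOpen_mono le_sup_right hU))]
  simpa using Subgroup.mul_mem _ (Subgroup.mem_sup_left (mem_closedNormalClosure_self y))
    (Subgroup.mem_sup_right h)

theorem JustInfinite.finiteIndex_closedNormalClosure (hG : JustInfinite G) {y : G} (hy : y ≠ 1) :
    (closedNormalClosure y).FiniteIndex :=
  hG.2 _ inferInstance (isClosed_closedNormalClosure y) fun h =>
    hy (Subgroup.mem_bot.mp (h ▸ mem_closedNormalClosure_self y))

theorem JustInfinite.isOpen_closedNormalClosure (hG : JustInfinite G) {y : G} (hy : y ≠ 1) :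
    IsOpen (closedNormalClosure y : Set G) :=
  have := hG.finiteIndex_closedNormalClosure hy
  Subgroup.isOpen_of_isClosed_of_finiteIndex _ (isClosed_closedNormalClosure y)

theorem Minimal.closedNormalClosure_eq {C : Set G} {M : Subgroup G}
    (hM : Minimal (· ∈ closedNormalClosure '' C) M) {a : G} (haC : a ∈ C) (haM : a ∈ M) :
    closedNormalClosure a = M := by
  obtain ⟨y, -, rfl⟩ := hM.prop
  exact hM.eq_of_le ⟨a, haC, rfl⟩
    ((closedNormalClosure_le_iff (isClosed_closedNormalClosure y)).mpr haM)

variable [CompactSpace G]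

theorem Subgroup.finiteIndex_of_isOpen_s4 {H : Subgroup G} (hH : IsOpen (H : Set G)) :
    H.FiniteIndex :=
  have := H.quotient_finite_of_isOpen hH
  Subgroup.finiteIndex_of_finite_quotient

theorem Subgroup.isOpen_normalCore {H : Subgroup G} (hH : IsOpen (H : Set G)) :
    IsOpen (H.normalCore : Set G) :=
  have := Subgroup.finiteIndex_of_isOpen_s4 hH
  H.normalCore.isOpen_of_isClosed_of_finiteIndex (H.normalCore_isClosed (H.isClosed_of_isOpen hH))

theorem exists_closedNormalClosure_le_of_isChain {C : Set G} (hC : IsClosed C)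
    {c : Set (Subgroup G)} (hcC : c ⊆ closedNormalClosure '' C) (hc : IsChain (· ≤ ·) c)
    (hne : c.Nonempty) : ∃ x ∈ C, ∀ M ∈ c, closedNormalClosure x ≤ M := by
  have : Nonempty c := hne.to_subtype
  have hclosed : ∀ M ∈ c, IsClosed (M : Set G) := fun M hM => by
    obtain ⟨z, -, rfl⟩ := hcC hM
    exact isClosed_closedNormalClosure z
  have hdir : Directed (· ⊇ ·) fun M : c => C ∩ (M : Set G) :=
    IsChain.directed (f := fun M : Subgroup G => C ∩ (M : Set G))
      (hc.symm.mono_rel fun _ _ hle => Set.inter_subset_inter_right C hle)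
  obtain ⟨x, hx⟩ := IsCompact.nonempty_iInter_of_directed_nonempty_isCompact_isClosed _ hdir
    (fun ⟨M, hM⟩ => by
      obtain ⟨z, hz, rfl⟩ := hcC hM
      exact ⟨z, hz, mem_closedNormalClosure_self z⟩)
    (fun M => (hC.inter (hclosed M M.2)).isCompact) (fun M => hC.inter (hclosed M M.2))
  simp only [Set.mem_iInter, Subtype.forall] at hx
  refine ⟨x, (hx _ hne.some_mem).1, fun M hM => ?_⟩
  obtain ⟨z, -, rfl⟩ := hcC hM
  exact (closedNormalClosure_le_iff (isClosed_closedNormalClosure z)).mpr (hx _ hM).2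

theorem exists_minimal_closedNormalClosure_le {C : Set G} (hC : IsClosed C) {y : G}
    (hy : y ∈ C) :
    ∃ M ≤ closedNormalClosure y, Minimal (· ∈ closedNormalClosure '' C) M :=
  @zorn_le_nonempty₀ (Subgroup G)ᵒᵈ _ _ (fun c hcC hc M hM => by
    obtain ⟨x, hx, hle⟩ := exists_closedNormalClosure_le_of_isChain hC hcC hc.symm ⟨M, hM⟩
    exact ⟨closedNormalClosure x, ⟨x, hx, rfl⟩, hle⟩) _ ⟨y, hy, rfl⟩

variable [TotallyDisconnectedSpace G]

open scoped Pointwise in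
theorem exists_openNormalSubgroup_lt_index (hG : Infinite G) (n : ℕ) :
    ∃ U : OpenNormalSubgroup G, n < (U : Subgroup G).index := by
  obtain ⟨s, hs⟩ := Infinite.exists_subset_card_eq G (n + 1)
  have hV : IsOpen (((s : Set G)⁻¹ * (s : Set G)) \ {1})ᶜ :=
    ((s.finite_toSet.inv.mul s.finite_toSet).sdiff).isClosed.isOpen_compl
  obtain ⟨U, hU⟩ := ProfiniteGrp.exist_openNormalSubgroup_sub_open_nhds_of_one hV (by simp)
  refine ⟨U, ?_⟩
  have := Subgroup.finiteIndex_of_isOpen_s4 U.isOpen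
  have hinj : Function.Injective fun g : s => (g : G ⧸ (U : Subgroup G)) := by
    rintro ⟨g, hg⟩ ⟨h, hh⟩ hgh
    by_contra hne
    exact hU (QuotientGroup.eq.mp hgh)
      ⟨Set.mul_mem_mul (Set.inv_mem_inv.mpr hg) hh, by simpa [inv_mul_eq_one] using hne⟩
  calc n < Nat.card s := by simp [hs]
    _ ≤ _ := Nat.card_le_card_of_injective _ hinj

theorem obliqueCore_le_of_not_le {H N : Subgroup G} [N.Normal] (hN : IsClosed (N : Set G))
    (hNH : ¬N ≤ H) : obliqueCore H ≤ N := by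
  refine (le_sInf fun O hO => ?_).trans (ProfiniteGrp.closedSubgroup_eq_sInf_open ⟨N, hN⟩).ge
  have hcore : O.normalCore.Normal ∧ IsOpen (O.normalCore : Set G) ∧ ¬O.normalCore ≤ H :=
    ⟨inferInstance, Subgroup.isOpen_normalCore hO.1,
      fun h => hNH ((Subgroup.normal_le_normalCore.mpr hO.2).trans h)⟩
  exact inf_le_right.trans ((iInf₂_le O.normalCore hcore).trans O.normalCore_le)

theorem OI_index_le_of_not_le {N K : Subgroup G} [N.Normal] [K.Normal]
    (hN : IsClosed (N : Set G)) (hK : IsOpen (K : Set G)) (hNK : ¬N ≤ K) : OI G K.index ≤ N :=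
  obliqueCore_le_of_not_le hN fun hle => hNK (hle.trans (normalIndexCap_le hK))

theorem finite_or_justInfinite_of_finiteIndex_OI (h : ∀ n, 0 < n → (OI G n).FiniteIndex) :
    Finite G ∨ JustInfinite G := by
  refine (finite_or_infinite G).imp_right fun hG => ⟨hG, fun N hN hNc hN1 => ?_⟩
  obtain ⟨g, hgN, hg1⟩ := N.bot_or_exists_ne_one.resolve_left hN1
  obtain ⟨K, hK⟩ := ProfiniteGrp.exist_openNormalSubgroup_sub_open_nhds_of_one
    isOpen_compl_singleton (Ne.symm hg1)
  have := Subgroup.finiteIndex_of_isOpen_s4 K.isOpen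
  have := h (K : Subgroup G).index (Nat.pos_of_ne_zero Subgroup.FiniteIndex.index_ne_zero)
  exact Subgroup.finiteIndex_of_le
    (OI_index_le_of_not_le hNc K.isOpen fun hle => hK (hle hgN) rfl)

open Topology in
theorem JustInfinite.exists_mem_nhds_minimal_eq (hG : JustInfinite G) {C : Set G}
    (hC : IsClopen C) (h1 : (1 : G) ∉ C) {x : G} (hx : x ∈ C) :
    ∃ V ∈ 𝓝 x, ∃ M₀, ∀ w ∈ C ∩ V,
      Minimal (· ∈ closedNormalClosure '' C) (closedNormalClosure w) →
        closedNormalClosure w = M₀ := by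
  obtain ⟨M₀, hM₀x, hM₀⟩ := exists_minimal_closedNormalClosure_le hC.isClosed hx
  obtain ⟨x₀, hx₀C, rfl⟩ := hM₀.prop
  have hD : IsOpen ({u | x₀ * u ∈ C} ∩ closedNormalClosure x₀) :=
    (hC.isOpen.preimage (continuous_const_mul x₀)).inter
      (hG.isOpen_closedNormalClosure (ne_of_mem_of_not_mem hx₀C h1))
  obtain ⟨U, hU⟩ := ProfiniteGrp.exist_openNormalSubgroup_sub_open_nhds_of_one hD
    ⟨by simpa using hx₀C, one_mem _⟩
  refine ⟨{w | w⁻¹ * x ∈ U}, (U.isOpen.preimage (by fun_prop)).mem_nhds (by simp),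
    closedNormalClosure x₀, fun w ⟨hwC, hwx⟩ hw => ?_⟩
  -- `x₀ = a * u` with `a ∈ C` lying in both minimal members
  obtain ⟨a, ha, u, hu, rfl⟩ := Subgroup.mem_sup_of_normal_right.mp
    (closedNormalClosure_le_sup U.isOpen hwx (hM₀x (mem_closedNormalClosure_self _)))
  obtain ⟨hauC, hau⟩ := hU (inv_mem hu)
  replace hauC : a ∈ C := by simpa using hauC
  have haM₀ : a ∈ closedNormalClosure (a * u) := by
    simpa using mul_mem (mem_closedNormalClosure_self (a * u)) hau
  rw [← hw.closedNormalClosure_eq hauC ha, hM₀.closedNormalClosure_eq hauC haM₀]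

theorem JustInfinite.finite_setOf_minimal_closedNormalClosure (hG : JustInfinite G) {C : Set G}
    (hC : IsClopen C) (h1 : (1 : G) ∉ C) :
    {M | Minimal (· ∈ closedNormalClosure '' C) M}.Finite := by
  choose! V hV M₀ hM₀ using fun x (hx : x ∈ C) => hG.exists_mem_nhds_minimal_eq hC h1 hx
  obtain ⟨b, hbC, hcover⟩ := hC.isClosed.isCompact.elim_nhds_subcover V hV
  refine (b.finite_toSet.image M₀).subset fun M hM => ?_
  obtain ⟨w, hwC, rfl⟩ := hM.prop
  obtain ⟨x, hxb, hwx⟩ := Set.mem_iUnion₂.mp (hcover hwC)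
  exact ⟨x, hxb, (hM₀ x (hbC x hxb) w ⟨hwC, hwx⟩ hM).symm⟩

theorem JustInfinite.exists_finiteIndex_le_closedNormalClosure (hG : JustInfinite G) {C : Set G}
    (hC : IsClopen C) (h1 : (1 : G) ∉ C) :
    ∃ W : Subgroup G, W.FiniteIndex ∧ ∀ y ∈ C, W ≤ closedNormalClosure y := by
  have := (hG.finite_setOf_minimal_closedNormalClosure hC h1).to_subtype
  refine ⟨⨅ M : {M | Minimal (· ∈ closedNormalClosure '' C) M}, M,
    Subgroup.finiteIndex_iInf fun M => ?_, fun y hy => ?_⟩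
  · obtain ⟨y, hy, hM⟩ := M.2.prop
    exact hM ▸ hG.finiteIndex_closedNormalClosure (ne_of_mem_of_not_mem hy h1)
  · obtain ⟨M, hMy, hM⟩ := exists_minimal_closedNormalClosure_le hC.isClosed hy
    exact (iInf_le _ ⟨M, hM⟩).trans hMy

theorem JustInfinite.finiteIndex_obliqueCore (hG : JustInfinite G) {H : Subgroup G}
    (hH : IsOpen (H : Set G)) : (obliqueCore H).FiniteIndex := by
  obtain ⟨W, hW, hWle⟩ := hG.exists_finiteIndex_le_closedNormalClosure
    (isClopen_compl_iff.mpr ⟨H.isClosed_of_isOpen hH, hH⟩) (by simp)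
  have := Subgroup.finiteIndex_of_isOpen_s4 hH
  refine Subgroup.finiteIndex_of_le (H := H ⊓ W) (le_inf inf_le_left (inf_le_right.trans
    (le_iInf₂ fun K ⟨hKn, hKo, hKH⟩ => ?_)))
  obtain ⟨y, hyK, hyH⟩ := SetLike.not_le_iff_exists.mp hKH
  exact (hWle y hyH).trans ((closedNormalClosure_le_iff (K.isClosed_of_isOpen hKo)).mpr hyK)

theorem JustInfinite.finiteIndex_normalIndexCap (hG : JustInfinite G) (n : ℕ) :
    (normalIndexCap G n).FiniteIndex := by
  obtain ⟨U, hnU⟩ := exists_openNormalSubgroup_lt_index hG.1 n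
  have := hG.finiteIndex_obliqueCore U.isOpen
  suffices obliqueCore (U : Subgroup G) ≤ normalIndexCap G n from Subgroup.finiteIndex_of_le this
  refine inf_le_right.trans (le_iInf₂ fun K hK => iInf₂_le K ⟨hK.1, hK.2.1, fun hKU => ?_⟩)
  have := Subgroup.finiteIndex_of_isOpen_s4 hK.2.1
  exact (Subgroup.index_antitone hKU).not_gt (hK.2.2.trans_lt hnU)

theorem JustInfinite.finiteIndex_OI (hG : JustInfinite G) (n : ℕ) : (OI G n).FiniteIndex :=
  have := hG.finiteIndex_normalIndexCap n
  hG.finiteIndex_obliqueCore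
    ((normalIndexCap G n).isOpen_of_isClosed_of_finiteIndex (isClosed_normalIndexCap n))

end

theorem finite_or_just_infinite_iff_obliquity_general (G : Type*) [Group G] [TopologicalSpace G]
    [IsTopologicalGroup G] [CompactSpace G] [TotallyDisconnectedSpace G] :
    ((Finite G ∨ JustInfinite G) ↔ ∀ n : ℕ, 0 < n → (OI G n).FiniteIndex) ∧
    ((Finite G ∨ JustInfinite G) ↔ ∃ η : ℕ → ℕ, ∀ n : ℕ, obFun G n ≤ (η n : Cardinal)) := by
  have hfwd : Finite G ∨ JustInfinite G → ∀ n, (OI G n).FiniteIndex := by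
    rintro (hG | hG) n
    · infer_instance
    · exact hG.finiteIndex_OI n
  have hbwd := finite_or_justInfinite_of_finiteIndex_OI (G := G)
  have hob : (∃ η : ℕ → ℕ, ∀ n, obFun G n ≤ η n) ↔ ∀ n, (OI G n).FiniteIndex :=
    Classical.skolem.symm.trans (forall_congr' fun _ => Subgroup.exists_mk_quotient_le_natCast_iff)
  rw [hob]
  exact ⟨⟨fun h n _ => hfwd h n, hbwd⟩, ⟨hfwd, fun h => hbwd fun n _ => h n⟩⟩

/-- A profinite group `G` is finite or just infinite if and only if `OI_n(G)` has
finite index in `G` for every positive integer `n`; equivalently, if and only if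
there is a function `η : ℕ → ℕ` bounding the generalised obliquity function. -/
theorem finite_or_just_infinite_iff_obliquity (G : Type*) [Group G] [TopologicalSpace G]
    [IsTopologicalGroup G] [CompactSpace G] [T2Space G] [TotallyDisconnectedSpace G] :
    ((Finite G ∨ JustInfinite G) ↔ ∀ n : ℕ, 0 < n → (OI G n).FiniteIndex) ∧
    ((Finite G ∨ JustInfinite G) ↔ ∃ η : ℕ → ℕ, ∀ n : ℕ, obFun G n ≤ (η n : Cardinal)) :=
  finite_or_just_infinite_iff_obliquity_general G
end

section
/- Let G be a just infinite profinite group, let H be a closed subgroup of G of finite index h, and let t be the index in G of the normal core Core_G(H) = ⋂_{g ∈ G} gHg⁻¹. Then for all positive integers n, h · ob*_H(n) ≤ ob*_G(t·nʰ). -/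
/-- The strong oblique core
`Ob*_G(H) = H ∩ ⋂ {K ≤_o G ∣ H ≤ N_G(K), K ≰ H}`. -/
def strongObliqueCore {G : Type*} [Group G] [TopologicalSpace G] (H : Subgroup G) :
    Subgroup G :=
  H ⊓ ⨅ (K : Subgroup G) (_ : IsOpen (K : Set G) ∧ H ≤ Subgroup.normalizer (K : Set G) ∧ ¬ K ≤ H), K

/-- `OI*_n(G) = Ob*_G(I⊲_n(G))`. -/
def OIstar (G : Type*) [Group G] [TopologicalSpace G] (n : ℕ) : Subgroup G :=
  strongObliqueCore (normalIndexCap G n)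

/-- The strong generalised obliquity function `ob*_G(n) = |G : OI*_n(G)|`, with
values in `Cardinal` so that infinite index is recorded faithfully. -/
noncomputable def obStarFun (G : Type*) [Group G] [TopologicalSpace G] (n : ℕ) : Cardinal :=
  Cardinal.mk (G ⧸ OIstar G n)

/-! Let `t = |G : Core_G(H)|`. If `K` is an open normal subgroup of `H` of index at most `n`,
then, since `H` normalises `K`, the normal core of `K` in `G` is the intersection of the `h`
conjugates `gKg⁻¹`, one for each coset `gH`; each meets `Core_G(H)` in a subgroup of index at
most `n`, so `Core_G(H) ∩ Core_G(K)` is an open normal subgroup of `G` of index at most `t nʰ`.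
Hence `I⊲_{t nʰ}(G) ≤ I⊲_n(H)`. Every open subgroup of `H` normalised by `I⊲_n(H)` and not
contained in it is then an open subgroup of `G` normalised by `I⊲_{t nʰ}(G)` and not contained
in it, so `OI*_{t nʰ}(G) ≤ OI*_n(H)`, and `|G : OI*_n(H)| = h · ob*_H(n)`. -/

open Subgroup Cardinal

namespace Subgroup

variable {G : Type*} [Group G]

theorem map_conj_mul_of_mem_normalizer {K : Subgroup G} {a : G}
    (ha : a ∈ normalizer (K : Set G)) (g : G) :
    K.map (MulAut.conj (g * a) : G →* G) = K.map (MulAut.conj g : G →* G) := by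
  rw [map_mul, MulAut.mul_def, MulEquiv.coe_monoidHom_trans, ← map_map,
    mem_normalizer_iff_map_conj_eq.mp ha]

theorem iInf_map_conj_out_le_normalCore {H K : Subgroup G}
    (hK : H ≤ normalizer (K : Set G)) :
    ⨅ q : G ⧸ H, K.map (MulAut.conj q.out : G →* G) ≤ K.normalCore := by
  rw [normalCore_eq_iInf_map_conj]
  refine le_iInf fun g => iInf_le_of_le (g : G ⧸ H) ?_
  obtain ⟨a, ha⟩ := QuotientGroup.mk_out_eq_mul H g
  rw [ha, map_conj_mul_of_mem_normalizer (hK a.2)]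

theorem relIndex_map_conj_normalCore_le {H K : Subgroup G} [K.FiniteIndex] (g : G) :
    (K.map (MulAut.conj g : G →* G)).relIndex H.normalCore ≤ K.relIndex H := by
  have hcore : H.normalCore ≤ H.map (MulAut.conj g : G →* G) := by
    rw [normalCore_eq_iInf_map_conj]
    exact iInf_le _ g
  calc (K.map (MulAut.conj g : G →* G)).relIndex H.normalCore
      ≤ (K.map (MulAut.conj g : G →* G)).relIndex (H.map (MulAut.conj g : G →* G)) :=
        relIndex_le_of_le_right hcore <| by
          rw [relIndex_map_map_of_injective K H (MulAut.conj g).injective]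
          exact FiniteIndex.index_ne_zero
    _ = K.relIndex H := relIndex_map_map_of_injective K H (MulAut.conj g).injective

theorem index_normalCore_inf_normalCore_le {H K : Subgroup G} [H.FiniteIndex] [K.FiniteIndex]
    (hK : H ≤ normalizer (K : Set G)) :
    (H.normalCore ⊓ K.normalCore).index ≤ H.normalCore.index * K.relIndex H ^ H.index := by
  have : Fintype (G ⧸ H) := fintypeQuotientOfFiniteIndex
  set C := H.normalCore
  set conjs : G ⧸ H → Subgroup G := fun q => K.map (MulAut.conj q.out : G →* G)
  have : (⨅ q, conjs q).FiniteIndex :=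
    finiteIndex_iInf fun q => ⟨by simpa [conjs] using FiniteIndex.index_ne_zero⟩
  calc (C ⊓ K.normalCore).index = K.normalCore.relIndex C * C.index := by
        rw [← relIndex_mul_index inf_le_left, inf_relIndex_left]
    _ ≤ (⨅ q, conjs q).relIndex C * C.index := by
        gcongr
        exact relIndex_le_of_le_left (iInf_map_conj_out_le_normalCore hK)
          FiniteIndex.index_ne_zero
    _ ≤ (∏ q, (conjs q).relIndex C) * C.index := by grw [relIndex_iInf_le]
    _ ≤ K.relIndex H ^ H.index * C.index := by
        grw [Finset.prod_le_pow_card _ _ _ fun q _ => relIndex_map_conj_normalCore_le q.out]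
        rw [Finset.card_univ, ← Nat.card_eq_fintype_card, ← index_eq_card]
    _ = C.index * K.relIndex H ^ H.index := mul_comm _ _

theorem mk_quotient_le_of_le {A B : Subgroup G} (h : A ≤ B) : #(G ⧸ B) ≤ #(G ⧸ A) :=
  mk_le_of_surjective (f := quotientMapOfLE h) fun q =>
    QuotientGroup.induction_on q fun g => ⟨g, rfl⟩

theorem mk_quotient_map_subtype {H : Subgroup G} (K : Subgroup H) :
    #(G ⧸ K.map H.subtype) = #(G ⧸ H) * #(H ⧸ K) := by
  rw [mk_congr (quotientEquivProdOfLE (map_subtype_le K)), mk_prod, lift_id, lift_id,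
    subgroupOf, comap_map_eq_self_of_injective H.subtype_injective]

end Subgroup

section Topology

variable {G : Type*} [Group G] [TopologicalSpace G]

theorem isOpen_map_subtype {H : Subgroup G} (hH : IsOpen (H : Set G)) {K : Subgroup H}
    (hK : IsOpen (K : Set H)) : IsOpen (K.map H.subtype : Set G) := by
  rw [coe_map, coe_subtype]
  exact hH.isOpenMap_subtype_val _ hK

theorem normalIndexCap_le_s7 {N : Subgroup G} {m : ℕ} (hN : N.Normal) (hNo : IsOpen (N : Set G))
    (hNm : N.index ≤ m) : normalIndexCap G m ≤ N :=
  iInf₂_le N ⟨hN, hNo, hNm⟩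

theorem normalIndexCap_antitone : Antitone (normalIndexCap G) := fun _ _ hm =>
  le_iInf₂ fun _ ⟨hN, hNo, hNm⟩ => normalIndexCap_le_s7 hN hNo (hNm.trans hm)

theorem strongObliqueCore_le_map {H A : Subgroup G} {B : Subgroup H} (hH : IsOpen (H : Set G))
    (hAB : A ≤ B.map H.subtype) : strongObliqueCore A ≤ (strongObliqueCore B).map H.subtype := by
  rintro x ⟨hxA, hxK⟩
  obtain ⟨y, hyB, rfl⟩ := hAB hxA
  refine ⟨y, ⟨hyB, mem_iInf.mpr fun K => mem_iInf.mpr fun ⟨hKo, hBK, hKB⟩ => ?_⟩, rfl⟩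
  have hAK : A ≤ normalizer (K.map H.subtype : Set G) :=
    hAB.trans ((map_mono hBK).trans (le_normalizer_map _))
  have hKA : ¬ K.map H.subtype ≤ A := fun hKA =>
    hKB ((map_le_map_iff_of_injective H.subtype_injective).mp (hKA.trans hAB))
  exact (mem_map_iff_mem H.subtype_injective).mp
    (mem_iInf.mp (mem_iInf.mp hxK _) ⟨isOpen_map_subtype hH hKo, hAK, hKA⟩)

variable [IsTopologicalGroup G] [CompactSpace G]

theorem normalIndexCap_le_map_subtype {H : Subgroup G} [H.FiniteIndex] (hH : IsClosed (H : Set G))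
    {K : Subgroup H} (hK : K.Normal) (hKo : IsOpen (K : Set H)) :
    normalIndexCap G (H.normalCore.index * K.index ^ H.index) ≤ K.map H.subtype := by
  set K' := K.map H.subtype
  have hK'o : IsOpen (K' : Set G) :=
    isOpen_map_subtype (H.isOpen_of_isClosed_of_finiteIndex hH) hKo
  have : Finite (G ⧸ K') := K'.quotient_finite_of_isOpen hK'o
  have : K'.FiniteIndex := finiteIndex_of_finite_quotient
  have hK' : K'.subgroupOf H = K := comap_map_eq_self_of_injective H.subtype_injective K
  have hnorm : H ≤ normalizer (K' : Set G) :=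
    (normal_subgroupOf_iff_le_normalizer (map_subtype_le K)).mp (by rwa [hK'])
  have hN : IsClosed ((H.normalCore ⊓ K'.normalCore : Subgroup G) : Set G) :=
    (H.normalCore_isClosed hH).inter (K'.normalCore_isClosed (K'.isClosed_of_isOpen hK'o))
  calc normalIndexCap G (H.normalCore.index * K.index ^ H.index)
      ≤ H.normalCore ⊓ K'.normalCore :=
        normalIndexCap_le_s7 inferInstance (isOpen_of_isClosed_of_finiteIndex _ hN)
          (hK' ▸ index_normalCore_inf_normalCore_le hnorm)
    _ ≤ K' := inf_le_right.trans (normalCore_le K')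

theorem normalIndexCap_le_map_normalIndexCap {H : Subgroup G} [H.FiniteIndex]
    (hH : IsClosed (H : Set G)) {n : ℕ} (hn : 0 < n) :
    normalIndexCap G (H.normalCore.index * n ^ H.index) ≤ (normalIndexCap H n).map H.subtype := by
  have hcore : IsOpen (H.normalCore : Set G) :=
    isOpen_of_isClosed_of_finiteIndex _ (H.normalCore_isClosed hH)
  have hle : normalIndexCap G (H.normalCore.index * n ^ H.index) ≤ H :=
    (normalIndexCap_le_s7 inferInstance hcore (Nat.le_mul_of_pos_right _ (pow_pos hn _))).trans
      (normalCore_le H)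
  rw [← map_subgroupOf_eq_of_le hle]
  refine map_mono (le_iInf₂ fun K ⟨hK, hKo, hKn⟩ => ?_)
  rw [← map_le_map_iff_of_injective H.subtype_injective, map_subgroupOf_eq_of_le hle]
  exact (normalIndexCap_antitone (Nat.mul_le_mul_left _ (Nat.pow_le_pow_left hKn _))).trans
    (normalIndexCap_le_map_subtype hH hK hKo)

theorem OIstar_le_map_OIstar {H : Subgroup G} [H.FiniteIndex] (hH : IsClosed (H : Set G))
    {n : ℕ} (hn : 0 < n) :
    OIstar G (H.normalCore.index * n ^ H.index) ≤ (OIstar H n).map H.subtype :=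
  strongObliqueCore_le_map (H.isOpen_of_isClosed_of_finiteIndex hH)
    (normalIndexCap_le_map_normalIndexCap hH hn)

end Topology

theorem obStarFun_le_general (G : Type*) [Group G] [TopologicalSpace G]
    [IsTopologicalGroup G] [CompactSpace G]
    (H : Subgroup G) (hHcl : IsClosed (H : Set G))
    (h t : ℕ) (hh : H.index = h) (hfin : H.FiniteIndex) (ht : H.normalCore.index = t) :
    ∀ n : ℕ, 0 < n →
      (h : Cardinal) * obStarFun ↥H n ≤ obStarFun G (t * n ^ h) := by
  intro n hn
  subst hh ht
  calc (H.index : Cardinal) * obStarFun H n = #(G ⧸ (OIstar H n).map H.subtype) := by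
        rw [mk_quotient_map_subtype, index_eq_card, Nat.cast_card]
        rfl
    _ ≤ obStarFun G (H.normalCore.index * n ^ H.index) :=
        mk_quotient_le_of_le (OIstar_le_map_OIstar hHcl hn)

/-- Theorem C (ii): if `G` is a just infinite profinite group, `H` a closed subgroup
of index `h`, and `t = |G : Core_G(H)|`, then `h ⬝ ob*_H(n) ≤ ob*_G(t n^h)` for all
positive integers `n`. -/
theorem obStarFun_le (G : Type*) [Group G] [TopologicalSpace G]
    [IsTopologicalGroup G] [CompactSpace G] [T2Space G] [TotallyDisconnectedSpace G]
    (hG : JustInfinite G) (H : Subgroup G) (hHcl : IsClosed (H : Set G))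
    (h t : ℕ) (hh : H.index = h) (hfin : H.FiniteIndex) (ht : H.normalCore.index = t) :
    ∀ n : ℕ, 0 < n →
      (h : Cardinal) * obStarFun ↥H n ≤ obStarFun G (t * n ^ h) :=
  obStarFun_le_general G H hHcl h t hh hfin ht
end

section
/- Let G be a profinite group and let H be a closed normal subgroup of G. Then Φ⊲(H) ≤ Φ⊲(G). -/
/-!
If `N` is an open normal subgroup of `G` with `G ⧸ N` simple and `H` is normal but not contained
in `N`, then the image of `H` in `G ⧸ N` is a nontrivial normal subgroup, hence everything. So
`H ⧸ (H ⊓ N) ≅ G ⧸ N` is simple and `H ⊓ N` is open in `H`, whence `Φ⊲(H) ≤ H ⊓ N ≤ N`.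
If `H ≤ N` there is nothing to prove.
-/

/-- The normal Frattini subgroup `Φ⊲(G)`: the intersection of the open normal
subgroups with simple quotient (equivalently, of all maximal closed normal
subgroups). -/
def normalFrattini (G : Type*) [Group G] [TopologicalSpace G] : Subgroup G :=
  ⨅ (N : Subgroup G) (_ : ∃ _hN : N.Normal, IsOpen (N : Set G) ∧ IsSimpleGroup (G ⧸ N)), N

namespace Subgroup

variable {G : Type*} [Group G] {H N : Subgroup G} [N.Normal]

theorem map_mk'_eq_top_of_not_le [IsSimpleGroup (G ⧸ N)] (hH : H.Normal) (hHN : ¬H ≤ N) :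
    H.map (QuotientGroup.mk' N) = ⊤ :=
  ((hH.map _ (QuotientGroup.mk'_surjective N)).eq_bot_or_eq_top).resolve_left fun hbot =>
    hHN <| by rwa [map_eq_bot_iff, QuotientGroup.ker_mk'] at hbot

theorem isSimpleGroup_quotient_subgroupOf [IsSimpleGroup (G ⧸ N)] (hH : H.Normal)
    (hHN : ¬H ≤ N) : IsSimpleGroup (H ⧸ N.subgroupOf H) := by
  let f : H →* G ⧸ N := (QuotientGroup.mk' N).domRestrict H
  have hker : f.ker = N.subgroupOf H := by
    rw [MonoidHom.ker_domRestrict, QuotientGroup.ker_mk']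
  have hsurj : Function.Surjective f := by
    rw [← MonoidHom.range_eq_top, MonoidHom.domRestrict_range]
    exact map_mk'_eq_top_of_not_le hH hHN
  exact ((QuotientGroup.quotientMulEquivOfEq hker.symm).trans
    (QuotientGroup.quotientKerEquivOfSurjective f hsurj)).isSimpleGroup

end Subgroup

theorem normalFrattini_le {G : Type*} [Group G] [TopologicalSpace G] {N : Subgroup G}
    (hN : N.Normal) (hNopen : IsOpen (N : Set G)) (hNsimple : IsSimpleGroup (G ⧸ N)) :
    normalFrattini G ≤ N :=
  iInf₂_le N ⟨hN, hNopen, hNsimple⟩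

theorem normalFrattini_le_of_normal_general (G : Type*) [Group G] [TopologicalSpace G]
    (H : Subgroup G) (hHnorm : H.Normal) :
    (normalFrattini ↥H).map H.subtype ≤ normalFrattini G := by
  refine le_iInf₂ fun N ⟨hN, hNopen, hNsimple⟩ => ?_
  by_cases hHN : H ≤ N
  · exact (Subgroup.map_subtype_le _).trans hHN
  · rw [Subgroup.map_le_iff_le_comap, Subgroup.comap_subtype]
    exact normalFrattini_le (hN.subgroupOf H) (Subgroup.subgroupOf_isOpen H N hNopen)
      (Subgroup.isSimpleGroup_quotient_subgroupOf hHnorm hHN)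

/-- If `H` is a closed normal subgroup of a profinite group `G`, then
`Φ⊲(H) ≤ Φ⊲(G)`. -/
theorem normalFrattini_le_of_normal (G : Type*) [Group G] [TopologicalSpace G]
    [IsTopologicalGroup G] [CompactSpace G] [T2Space G] [TotallyDisconnectedSpace G]
    (H : Subgroup G) (hHnorm : H.Normal) (hHcl : IsClosed (H : Set G)) :
    (normalFrattini ↥H).map H.subtype ≤ normalFrattini G :=
  normalFrattini_le_of_normal_general G H hHnorm
end

section
/- Let G be a profinite group such that Φ⊲(G) is trivial. Then G is isomorphic, as a topological group, to a Cartesian product ∏_{i ∈ I} S_i of finite simple groups S_i (each factor either cyclic of prime order or non-abelian finite simple), with the product topology. In particular, the finite radical Fin(G) is dense in G. -/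
/-!
By Zorn's lemma choose a maximal set `T` of open normal subgroups with simple quotients that is
independent: `G` maps onto `∏_{N ∈ F} G ⧸ N` for every finite `F ⊆ T`. If `⋂ T` were not contained
in some such `M`, then `⋂ T` would map onto the simple group `G ⧸ M` and `T ∪ {M}` would still be
independent; so `⋂ T = Φ⊲(G) = 1`, and `G → ∏_{N ∈ T} G ⧸ N` is injective. Its image is compact
and, by independence, dense, so it is a topological isomorphism onto a product of finite simple
groups. In such a product the finitely supported elements are dense, and each of them lies in a
finite normal subgroup.
-/
universe u

open QuotientGroup

theorem dense_pi_of_forall_finset_exists_eq {ι : Type*} {X : ι → Type*}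
    [∀ i, TopologicalSpace (X i)] [∀ i, DiscreteTopology (X i)] {s : Set (∀ i, X i)}
    (h : ∀ (x : ∀ i, X i) (F : Finset ι), ∃ y ∈ s, ∀ i ∈ F, y i = x i) : Dense s := by
  refine dense_iff_inter_open.mpr fun U hU ⟨x, hxU⟩ => ?_
  obtain ⟨F, V, hV, hVU⟩ := isOpen_pi_iff.mp hU x hxU
  obtain ⟨y, hys, hyx⟩ := h x F
  exact ⟨y, hVU fun i hi => hyx i hi ▸ (hV i hi).2, hys⟩

theorem QuotientGroup.map_mk'_eq_top_of_not_le {G : Type*} [Group G] {D M : Subgroup G}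
    (hD : D.Normal) [M.Normal] [IsSimpleGroup (G ⧸ M)] (h : ¬ D ≤ M) :
    D.map (mk' M) = ⊤ :=
  ((hD.map _ (mk'_surjective M)).eq_bot_or_eq_top).resolve_left fun hbot =>
    h (by rwa [Subgroup.map_eq_bot_iff, ker_mk'] at hbot)

section Independence

variable {G : Type*} [Group G]

/-- Indexing `x` by all subgroups rather than by `T` avoids reindexing when `T` grows. -/
def QuotientIndependent (T : Set (Subgroup G)) : Prop :=
  ∀ (x : ∀ N : Subgroup G, G ⧸ N) (F : Finset (Subgroup G)), ↑F ⊆ T →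
    ∃ g : G, ∀ N ∈ F, (g : G ⧸ N) = x N

theorem quotientIndependent_sUnion {c : Set (Set (Subgroup G))} (hc : IsChain (· ⊆ ·) c)
    (h : ∀ T ∈ c, QuotientIndependent T) : QuotientIndependent (⋃₀ c) := by
  intro x F hF
  rcases c.eq_empty_or_nonempty with rfl | hne
  · exact ⟨1, fun N hN => by simpa using hF hN⟩
  obtain ⟨T, hTc, hFT⟩ :=
    hc.directedOn.exists_mem_subset_of_finite_of_subset_sUnion hne F.finite_toSet hF
  exact h T hTc x F hFT

theorem QuotientIndependent.insert {T : Set (Subgroup G)} (hT : QuotientIndependent T)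
    (hnormal : ∀ N ∈ T, N.Normal) {M : Subgroup G} [M.Normal] [IsSimpleGroup (G ⧸ M)]
    (hM : ¬ sInf T ≤ M) : QuotientIndependent (insert M T) := by
  classical
  intro x F hF
  obtain ⟨g, hg⟩ := hT x (F.erase M) fun N hN => by
    obtain ⟨hNM, hNF⟩ := Finset.mem_erase.mp hN
    exact (hF hNF).resolve_left hNM
  have hD : (sInf T).Normal := by
    rw [sInf_eq_iInf']
    exact Subgroup.normal_iInf_normal fun N => hnormal N N.2
  obtain ⟨d, hdT, hd⟩ := Subgroup.mem_map.mp
    ((map_mk'_eq_top_of_not_le hD hM).symm ▸ Subgroup.mem_top ((g : G ⧸ M)⁻¹ * x M))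
  -- `d` corrects `g` modulo `M` without disturbing it modulo the members of `T`
  refine ⟨g * d, fun N hN => ?_⟩
  by_cases hNM : N = M
  · subst hNM
    change (g : G ⧸ N) * mk' N d = x N
    rw [hd, mul_inv_cancel_left]
  · have hNT : N ∈ T := (hF hN).resolve_left hNM
    rw [mk_mul_of_mem g (sInf_le hNT hdT)]
    exact hg N (Finset.mem_erase.mpr ⟨hNM, hN⟩)

theorem exists_quotientIndependent_sInf_eq {𝒮 : Set (Subgroup G)}
    (h𝒮 : ∀ N ∈ 𝒮, ∃ _ : N.Normal, IsSimpleGroup (G ⧸ N)) :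
    ∃ T ⊆ 𝒮, QuotientIndependent T ∧ sInf T = sInf 𝒮 := by
  obtain ⟨T, hT⟩ := zorn_subset {T | T ⊆ 𝒮 ∧ QuotientIndependent T} fun c hc hchain =>
    ⟨⋃₀ c, ⟨Set.sUnion_subset fun T hT => (hc hT).1,
      quotientIndependent_sUnion hchain fun T hT => (hc hT).2⟩,
      fun _ => Set.subset_sUnion_of_mem⟩
  obtain ⟨hT𝒮, hTind⟩ := hT.prop
  refine ⟨T, hT𝒮, hTind, le_antisymm (le_sInf fun M hM => ?_) (sInf_le_sInf hT𝒮)⟩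
  by_contra hTM
  obtain ⟨_, _⟩ := h𝒮 M hM
  have hins := hT.eq_of_subset
    ⟨Set.insert_subset hM hT𝒮, hTind.insert (fun N hN => (h𝒮 N (hT𝒮 hN)).1) hTM⟩
    (Set.subset_insert M T)
  exact hTM (sInf_le (hins ▸ Set.mem_insert M T))

end Independence

section QuotientPi

variable {G : Type*} [Group G] {ι : Type*} (N : ι → Subgroup G) [∀ i, (N i).Normal]

def quotientPi : G →* ∀ i, G ⧸ N i :=
  MonoidHom.pi fun i => mk' (N i)

@[simp]
theorem quotientPi_apply (g : G) (i : ι) : quotientPi N g i = g :=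
  rfl

theorem ker_quotientPi : (quotientPi N).ker = ⨅ i, N i := by
  ext g
  simp [funext_iff, Subgroup.mem_iInf]

variable [TopologicalSpace G]

theorem continuous_quotientPi : Continuous (quotientPi N) :=
  continuous_pi fun _ => continuous_mk

variable [SeparatelyContinuousMul G] [CompactSpace G] {N}

theorem surjective_quotientPi (hopen : ∀ i, IsOpen (N i : Set G))
    (hdense : DenseRange (quotientPi N)) : Function.Surjective (quotientPi N) := by
  have := fun i => discreteTopology (hopen i)
  have hclosed := (isCompact_range (continuous_quotientPi N)).isClosed
  exact Set.range_eq_univ.mp (hclosed.closure_eq ▸ hdense.closure_range)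

noncomputable def quotientPiContinuousMulEquiv (hopen : ∀ i, IsOpen (N i : Set G))
    (hinf : ⨅ i, N i = ⊥) (hdense : DenseRange (quotientPi N)) : G ≃ₜ* ∀ i, G ⧸ N i :=
  have := fun i => discreteTopology (hopen i)
  let e := MulEquiv.ofBijective (quotientPi N)
    ⟨(MonoidHom.ker_eq_bot_iff _).mp ((ker_quotientPi N).trans hinf),
      surjective_quotientPi hopen hdense⟩
  { e with
    continuous_toFun := continuous_quotientPi N
    continuous_invFun :=
      (continuous_quotientPi N).continuous_symm_of_equiv_compact_to_t2 (f := e.toEquiv) }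

end QuotientPi

theorem QuotientIndependent.denseRange_quotientPi {G : Type*} [Group G] [TopologicalSpace G]
    [SeparatelyContinuousMul G] {T : Set (Subgroup G)} (hT : QuotientIndependent T)
    [∀ N : T, (N : Subgroup G).Normal] (hopen : ∀ N : T, IsOpen ((N : Subgroup G) : Set G)) :
    DenseRange (quotientPi (Subtype.val : T → Subgroup G)) := by
  classical
  have := fun N => discreteTopology (hopen N)
  refine dense_pi_of_forall_finset_exists_eq fun x F => ?_
  obtain ⟨g, hg⟩ := hT (fun N => if h : N ∈ T then x ⟨N, h⟩ else (1 : G))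
    (F.map (Function.Embedding.subtype _)) (by simp)
  exact ⟨quotientPi _ g, Set.mem_range_self g, fun N hN => by
    simpa [N.2] using hg N (Finset.mem_map_of_mem _ hN)⟩

def finiteRadical (G : Type*) [Group G] : Set G :=
  {x | ∃ N : Subgroup G, N.Normal ∧ (N : Set G).Finite ∧ x ∈ N}

theorem preimage_finiteRadical_subset {G H : Type*} [Group G] [Group H] {f : G →* H}
    (hf : Function.Injective f) : f ⁻¹' finiteRadical H ⊆ finiteRadical G :=
  fun _ ⟨N, hN, hfin, hx⟩ =>
    ⟨N.comap f, hN.comap f, show (f ⁻¹' N).Finite from hfin.preimage hf.injOn, hx⟩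

theorem ContinuousMulEquiv.dense_finiteRadical {G H : Type*} [Group G] [Group H]
    [TopologicalSpace G] [TopologicalSpace H] (e : G ≃ₜ* H) (hH : Dense (finiteRadical H)) :
    Dense (finiteRadical G) :=
  (hH.preimage e.toHomeomorph.isOpenMap).mono
    (preimage_finiteRadical_subset (f := e.toMulEquiv.toMonoidHom) e.injective)

theorem dense_finiteRadical_pi {ι : Type*} {S : ι → Type*} [∀ i, Group (S i)]
    [∀ i, Finite (S i)] [∀ i, TopologicalSpace (S i)] [∀ i, DiscreteTopology (S i)] :
    Dense (finiteRadical (∀ i, S i)) := by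
  classical
  refine dense_pi_of_forall_finset_exists_eq fun x F =>
    ⟨F.piecewise x 1, ?_, fun i hi => F.piecewise_eq_of_mem _ _ hi⟩
  let P := Subgroup.pi (↑F)ᶜ fun i => (⊥ : Subgroup (S i))
  refine ⟨P, ⟨fun y hy z i hi => ?_⟩, ?_, fun i hi => ?_⟩
  · simpa using Subgroup.mem_bot.mp (hy i hi)
  · refine Set.Finite.of_finite_image (f := fun y (i : F) => y i) (Set.toFinite _)
      fun y hy z hz hyz => funext fun i => ?_
    by_cases hi : i ∈ F
    · exact congrFun hyz ⟨i, hi⟩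
    · exact (Subgroup.mem_bot.mp (hy i hi)).trans (Subgroup.mem_bot.mp (hz i hi)).symm
  · simp [F.piecewise_eq_of_notMem _ _ hi]

theorem structure_of_trivial_normalFrattini_general (G : Type u) [Group G] [TopologicalSpace G]
    [IsTopologicalGroup G] [CompactSpace G]
    (hPhi : normalFrattini G = ⊥) :
    (∃ (I : Type u) (S : I → Type u) (_ : ∀ i, Group (S i)),
      (∀ i, Finite (S i)) ∧ (∀ i, IsSimpleGroup (S i)) ∧
      ∃ e : G ≃* (∀ i, S i),
        @Continuous G (∀ i, S i) _ (@Pi.topologicalSpace I S fun _ => ⊥) ⇑e ∧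
        @Continuous (∀ i, S i) G (@Pi.topologicalSpace I S fun _ => ⊥) _ ⇑e.symm) ∧
    Dense {x : G | ∃ N : Subgroup G, N.Normal ∧ (N : Set G).Finite ∧ x ∈ N} := by
  let 𝒮 : Set (Subgroup G) := {N | ∃ _ : N.Normal, IsOpen (N : Set G) ∧ IsSimpleGroup (G ⧸ N)}
  obtain ⟨T, hT𝒮, hTind, hTinf⟩ :=
    exists_quotientIndependent_sInf_eq (𝒮 := 𝒮) fun N ⟨hN, _, hs⟩ => ⟨hN, hs⟩
  have hnormal (N : T) : (N : Subgroup G).Normal := (hT𝒮 N.2).1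
  have hopen (N : T) : IsOpen ((N : Subgroup G) : Set G) := (hT𝒮 N.2).2.1
  have hinf : ⨅ N : T, (N : Subgroup G) = ⊥ := by
    rw [← sInf_eq_iInf', hTinf, ← hPhi, normalFrattini, sInf_eq_iInf]
    rfl
  let e := quotientPiContinuousMulEquiv hopen hinf (hTind.denseRange_quotientPi hopen)
  have hdiscrete (N : T) := discreteTopology (hopen N)
  have hfinite (N : T) := Subgroup.quotient_finite_of_isOpen _ (hopen N)
  have hbot : @Pi.topologicalSpace T (fun N => G ⧸ (N : Subgroup G)) (fun _ => ⊥) =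
      Pi.topologicalSpace := by
    congr
    funext N
    exact DiscreteTopology.eq_bot.symm
  exact ⟨⟨T, fun N => G ⧸ (N : Subgroup G), inferInstance, hfinite, fun N => (hT𝒮 N.2).2.2,
    e.toMulEquiv, by rw [hbot]; exact e.continuous, by rw [hbot]; exact e.symm.continuous⟩,
    e.dense_finiteRadical dense_finiteRadical_pi⟩

/-- If `G` is a profinite group with trivial normal Frattini subgroup, then `G` is
isomorphic as a topological group to a Cartesian product of finite simple groups
(each discrete, the product carrying the product topology); in particular the finite
radical of `G` (the union of its finite normal subgroups) is dense. -/
theorem structure_of_trivial_normalFrattini (G : Type u) [Group G] [TopologicalSpace G]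
    [IsTopologicalGroup G] [CompactSpace G] [T2Space G] [TotallyDisconnectedSpace G]
    (hPhi : normalFrattini G = ⊥) :
    (∃ (I : Type u) (S : I → Type u) (_ : ∀ i, Group (S i)),
      (∀ i, Finite (S i)) ∧ (∀ i, IsSimpleGroup (S i)) ∧
      ∃ e : G ≃* (∀ i, S i),
        @Continuous G (∀ i, S i) _ (@Pi.topologicalSpace I S fun _ => ⊥) ⇑e ∧
        @Continuous (∀ i, S i) G (@Pi.topologicalSpace I S fun _ => ⊥) _ ⇑e.symm) ∧
    Dense {x : G | ∃ N : Subgroup G, N.Normal ∧ (N : Set G).Finite ∧ x ∈ N} :=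
  structure_of_trivial_normalFrattini_general G hPhi
end
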